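/- arXiv:2502.05597 — 2 statements merged into one kernel-verified Lean document; each statement's English description precedes it below -/
import Mathlib

section
/- Let f be a signature of arity n and let α, β ∈ supp(f) with d = #1(β) − #1(α) > 0. Then there exists a signature g of arity d, obtained from f by a finite sequence of operations each of which is either a pinning of one variable to a constant or a ≠₂-self-loop, such that g(0^d) ≠ 0 and g(1^d) ≠ 0 (i.e., both the all-zero and the all-one strings lie in supp(g)). -/
/-- Number of `1`s (Hamming weight) of a Boolean string. -/
def wt1 {n : ℕ} (x : Fin n → Bool) : ℕ := (Finset.univ.filter fun i => x i = true).card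

/-- Pinning the `i`-th variable of `f` to the constant `c`. -/
noncomputable def pinSig {n : ℕ} (f : (Fin (n + 1) → Bool) → ℂ) (i : Fin (n + 1)) (c : Bool) :
    (Fin n → Bool) → ℂ :=
  fun x => f (i.insertNth c x)

/-- The `≠₂`-self-loop of a signature `f` of arity `n+2`, connecting the
variable at position `i` with the variable at position `j` among the remaining
ones: `x ↦ f(x with xᵢ=0, xⱼ=1) + f(x with xᵢ=1, xⱼ=0)`. -/
noncomputable def selfLoop {n : ℕ} (f : (Fin (n + 2) → Bool) → ℂ)
    (i : Fin (n + 2)) (j : Fin (n + 1)) : (Fin n → Bool) → ℂ :=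
  fun x => f (i.insertNth false (j.insertNth true x)) +
    f (i.insertNth true (j.insertNth false x))

/-- `PLReach n f m g` : the arity-`m` signature `g` is obtained from the
arity-`n` signature `f` by a finite (possibly empty) sequence of operations,
each of which is a pinning of one variable to a constant or a
`≠₂`-self-loop. -/
inductive PLReach : (n : ℕ) → ((Fin n → Bool) → ℂ) → (m : ℕ) → ((Fin m → Bool) → ℂ) → Prop
  | refl (n : ℕ) (f : (Fin n → Bool) → ℂ) : PLReach n f n f
  | pinStep {n : ℕ} {f : (Fin n → Bool) → ℂ} {m : ℕ} {g : (Fin (m + 1) → Bool) → ℂ}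
      (h : PLReach n f (m + 1) g) (i : Fin (m + 1)) (c : Bool) :
      PLReach n f m (pinSig g i c)
  | loopStep {n : ℕ} {f : (Fin n → Bool) → ℂ} {m : ℕ} {g : (Fin (m + 2) → Bool) → ℂ}
      (h : PLReach n f (m + 2) g) (i : Fin (m + 2)) (j : Fin (m + 1)) :
      PLReach n f m (selfLoop g i j)


/-!
Induct on the arity. If `α` and `β` agree at some position, pin that variable to the common
value: both weights drop by the same amount. Otherwise `β = ¬α`; if `α = 0ⁿ` then `β = 1ⁿ`
and `f` itself works. If not, pick `i` with `αᵢ = 1, βᵢ = 0` and `j` with `αⱼ = 0, βⱼ = 1` and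
take the `≠₂`-self-loop on `(i, j)`. The restrictions of `α` and `β` to the remaining variables
each pick out one term of the loop. If the loop vanishes at one of them, the other term — that
string with bits `i, j` swapped — lies in the support, has the same weight, and agrees with the
other string at `i`, so we pin instead. Otherwise the loop keeps both restrictions in the
support and lowers both weights by one.
-/

def HasConstantMinor {n : ℕ} (f : (Fin n → Bool) → ℂ) (d : ℕ) : Prop :=
  ∃ g : (Fin d → Bool) → ℂ, PLReach n f d g ∧ g (fun _ => false) ≠ 0 ∧ g (fun _ => true) ≠ 0

def GapYieldsConstantMinor (n d : ℕ) : Prop :=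
  ∀ (f : (Fin n → Bool) → ℂ) (α β : Fin n → Bool),
    f α ≠ 0 → f β ≠ 0 → wt1 β = wt1 α + d → HasConstantMinor f d

theorem PLReach.trans {n m k : ℕ} {f : (Fin n → Bool) → ℂ} {g : (Fin m → Bool) → ℂ}
    {h : (Fin k → Bool) → ℂ} (hfg : PLReach n f m g) (hgh : PLReach m g k h) :
    PLReach n f k h := by
  induction hgh with
  | refl => exact hfg
  | pinStep _ i c ih => exact ih.pinStep i c
  | loopStep _ i j ih => exact ih.loopStep i j

namespace HasConstantMinor

variable {m d : ℕ}

theorem of_pinSig {f : (Fin (m + 1) → Bool) → ℂ} {i : Fin (m + 1)} {c : Bool}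
    (h : HasConstantMinor (pinSig f i c) d) : HasConstantMinor f d :=
  let ⟨g, hg, h0, h1⟩ := h
  ⟨g, ((PLReach.refl _ f).pinStep i c).trans hg, h0, h1⟩

theorem of_selfLoop {f : (Fin (m + 2) → Bool) → ℂ} {i : Fin (m + 2)} {j : Fin (m + 1)}
    (h : HasConstantMinor (selfLoop f i j) d) : HasConstantMinor f d :=
  let ⟨g, hg, h0, h1⟩ := h
  ⟨g, ((PLReach.refl _ f).loopStep i j).trans hg, h0, h1⟩

end HasConstantMinor

theorem wt1_insertNth {n : ℕ} (i : Fin (n + 1)) (c : Bool) (x : Fin n → Bool) :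
    wt1 (i.insertNth c x) = c.toNat + wt1 x := by
  simp only [wt1, Finset.card_filter, Fin.sum_univ_succAbove _ i, Fin.insertNth_apply_same,
    Fin.insertNth_apply_succAbove]
  cases c <;> rfl

theorem wt1_insertNth_insertNth {n : ℕ} (i : Fin (n + 2)) (j : Fin (n + 1)) (a b : Bool)
    (x : Fin n → Bool) : wt1 (i.insertNth a (j.insertNth b x)) = a.toNat + b.toNat + wt1 x := by
  rw [wt1_insertNth, wt1_insertNth, Nat.add_assoc]

theorem wt1_eq_toNat_add_wt1_removeNth {n : ℕ} (i : Fin (n + 1)) (x : Fin (n + 1) → Bool) :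
    wt1 x = (x i).toNat + wt1 (i.removeNth x) := by
  conv_lhs => rw [← Fin.insertNth_self_removeNth i x]
  exact wt1_insertNth i (x i) _

theorem wt1_pos_iff {n : ℕ} {x : Fin n → Bool} : 0 < wt1 x ↔ ∃ i, x i = true := by
  simp [wt1, Finset.card_pos, Finset.filter_nonempty_iff]

theorem pinSig_removeNth {n : ℕ} (f : (Fin (n + 1) → Bool) → ℂ) (i : Fin (n + 1))
    (x : Fin (n + 1) → Bool) : pinSig f i (x i) (i.removeNth x) = f x := by
  rw [pinSig, Fin.insertNth_self_removeNth]

theorem Fin.insertNth_insertNth_removeNth_removeNth {n : ℕ} {α : Type*} (i : Fin (n + 2))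
    (j : Fin (n + 1)) (x : Fin (n + 2) → α) :
    i.insertNth (x i) (j.insertNth (x (i.succAbove j)) (j.removeNth (i.removeNth x))) = x := by
  rw [show x (i.succAbove j) = i.removeNth x j from rfl, Fin.insertNth_self_removeNth,
    Fin.insertNth_self_removeNth]

section Reduction

variable {m d : ℕ}

theorem hasConstantMinor_of_apply_eq (ih : GapYieldsConstantMinor m d)
    {f : (Fin (m + 1) → Bool) → ℂ} {α β : Fin (m + 1) → Bool} (i : Fin (m + 1))
    (hi : α i = β i) (hα : f α ≠ 0) (hβ : f β ≠ 0) (hwt : wt1 β = wt1 α + d) :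
    HasConstantMinor f d := by
  refine HasConstantMinor.of_pinSig (i := i) (c := α i) <|
    ih _ (i.removeNth α) (i.removeNth β) ?_ ?_ ?_
  · rwa [pinSig_removeNth]
  · rwa [hi, pinSig_removeNth]
  · rw [wt1_eq_toNat_add_wt1_removeNth i α, wt1_eq_toNat_add_wt1_removeNth i β, hi] at hwt
    omega

theorem hasConstantMinor_of_opposite_pair (ih₁ : GapYieldsConstantMinor (m + 1) d)
    (ih₀ : GapYieldsConstantMinor m d) {f : (Fin (m + 2) → Bool) → ℂ}
    {α β : Fin (m + 2) → Bool} (i : Fin (m + 2)) (j : Fin (m + 1))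
    (hαi : α i = true) (hαj : α (i.succAbove j) = false)
    (hβi : β i = false) (hβj : β (i.succAbove j) = true)
    (hα : f α ≠ 0) (hβ : f β ≠ 0) (hwt : wt1 β = wt1 α + d) :
    HasConstantMinor f d := by
  set xα := j.removeNth (i.removeNth α)
  set xβ := j.removeNth (i.removeNth β)
  have hαx : i.insertNth true (j.insertNth false xα) = α := by
    rw [← hαi, ← hαj, Fin.insertNth_insertNth_removeNth_removeNth]
  have hβx : i.insertNth false (j.insertNth true xβ) = β := by
    rw [← hβi, ← hβj, Fin.insertNth_insertNth_removeNth_removeNth]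
  have hwtx : wt1 xβ = wt1 xα + d := by
    simp only [← hαx, ← hβx, wt1_insertNth_insertNth, Bool.toNat_true, Bool.toNat_false] at hwt
    omega
  by_cases hloopα : selfLoop f i j xα = 0
  · have hα' : f (i.insertNth false (j.insertNth true xα)) ≠ 0 := by
      rw [selfLoop, hαx] at hloopα
      rw [eq_neg_of_add_eq_zero_left hloopα]
      exact neg_ne_zero.mpr hα
    refine hasConstantMinor_of_apply_eq ih₁ i (by simp [hβi]) hα' hβ ?_
    simp only [← hβx, wt1_insertNth_insertNth, Bool.toNat_true, Bool.toNat_false]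
    omega
  by_cases hloopβ : selfLoop f i j xβ = 0
  · have hβ' : f (i.insertNth true (j.insertNth false xβ)) ≠ 0 := by
      rw [selfLoop, hβx] at hloopβ
      rw [eq_neg_of_add_eq_zero_right hloopβ]
      exact neg_ne_zero.mpr hβ
    refine hasConstantMinor_of_apply_eq ih₁ i (by simp [hαi]) hα hβ' ?_
    simp only [← hαx, wt1_insertNth_insertNth, Bool.toNat_true, Bool.toNat_false]
    omega
  exact HasConstantMinor.of_selfLoop <| ih₀ _ xα xβ hloopα hloopβ hwtx

end Reduction

theorem gapYieldsConstantMinor (n d : ℕ) : GapYieldsConstantMinor n d := by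
  induction n using Nat.strong_induction_on with
  | _ n ih =>
  intro f α β hα hβ hwt
  by_cases hagree : ∃ i, α i = β i
  · obtain ⟨i, hi⟩ := hagree
    obtain ⟨m, rfl⟩ : ∃ m, n = m + 1 := Nat.exists_eq_succ_of_ne_zero (Fin.pos i).ne'
    exact hasConstantMinor_of_apply_eq (ih m m.lt_succ_self) i hi hα hβ hwt
  push Not at hagree
  have hβ_eq : ∀ k, β k = !α k := fun k => Bool.eq_not_iff.mpr (hagree k).symm
  by_cases hα0 : ∀ k, α k = false
  · obtain rfl : α = fun _ => false := funext hα0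
    obtain rfl : β = fun _ => true := funext fun k => by simp [hβ_eq]
    obtain rfl : d = n := by simpa [wt1] using hwt.symm
    exact ⟨f, .refl _ f, hα, hβ⟩
  obtain ⟨i, hαi⟩ : ∃ i, α i = true := by simpa using hα0
  have hα_pos : 0 < wt1 α := wt1_pos_iff.mpr ⟨i, hαi⟩
  obtain ⟨k, hβk⟩ := wt1_pos_iff.mp (show 0 < wt1 β by omega)
  have hki : k ≠ i := by rintro rfl; simp [hβ_eq, hαi] at hβk
  obtain ⟨m, rfl⟩ : ∃ m, n = m + 2 := ⟨n - 2, by have := Fin.pos i; omega⟩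
  obtain ⟨j, rfl⟩ := Fin.exists_succAbove_eq hki
  exact hasConstantMinor_of_opposite_pair (ih (m + 1) (by omega)) (ih m (by omega)) i j hαi
    (by simpa [hβ_eq] using hβk) (by simp [hβ_eq, hαi]) hβk hα hβ hwt

theorem stmt10_general {n : ℕ} (f : (Fin n → Bool) → ℂ) (α β : Fin n → Bool)
    (hα : f α ≠ 0) (hβ : f β ≠ 0) (d : ℕ) (hwt : wt1 β = wt1 α + d) :
    ∃ g : (Fin d → Bool) → ℂ, PLReach n f d g ∧
      g (fun _ => false) ≠ 0 ∧ g (fun _ => true) ≠ 0 :=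
  gapYieldsConstantMinor n d f α β hα hβ hwt

/-- if `α, β ∈ supp(f)` with `d = #1(β) − #1(α) > 0`, then a
finite sequence of pinnings and `≠₂`-self-loops applied to `f` yields a
signature `g` of arity `d` with `g(0^d) ≠ 0` and `g(1^d) ≠ 0`. -/
theorem stmt10 {n : ℕ} (f : (Fin n → Bool) → ℂ) (α β : Fin n → Bool)
    (hα : f α ≠ 0) (hβ : f β ≠ 0) (d : ℕ) (hd : 0 < d) (hwt : wt1 β = wt1 α + d) :
    ∃ g : (Fin d → Bool) → ℂ, PLReach n f d g ∧
      g (fun _ => false) ≠ 0 ∧ g (fun _ => true) ≠ 0 :=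
  stmt10_general f α β hα hβ d hwt
end

section
/- Let N = [[1, 1],[0, 1]] ∈ M₂(ℂ), and for a signature f of arity n define N^{⊗n}f to be the signature x ↦ Σ_y (∏_{i=1}^n N_{x_i, y_i}) f(y). Then: (i) N^{⊗1}Δ₀ = Δ₀; and (ii) for every integer k ≥ −1, N^{⊗(k+2)} h_k = g_{k+2}, where h_k is the symmetric arity-(k+2) signature with value −k at Hamming weight 0, value 1 at Hamming weight 1, and value 0 at Hamming weight ≥ 2, and g_{k+2} is the symmetric arity-(k+2) signature with value 2 at Hamming weight 0, value 1 at Hamming weight 1, and value 0 at Hamming weight ≥ 2. Consequently the image under this transformation of the set {Δ₀} ∪ {h_k : k ≥ −1} is {Δ₀} ∪ {g_k : k ≥ 1}. -/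
/-- The matrix `N = [[1,1],[0,1]]` with entries indexed by `{0,1}` (so
`N_{0,0} = N_{0,1} = N_{1,1} = 1` and `N_{1,0} = 0`), as a function on
Booleans. -/
noncomputable def Nmat : Bool → Bool → ℂ := fun a b => if a = true ∧ b = false then 0 else 1

/-- The transformation `f ↦ N^{⊗n} f`,
`(N^{⊗n}f)(x) = Σ_y (∏ᵢ N_{xᵢ,yᵢ}) f(y)`. -/
noncomputable def Ntrans {n : ℕ} (f : (Fin n → Bool) → ℂ) : (Fin n → Bool) → ℂ :=
  fun x => ∑ y : Fin n → Bool, (∏ i, Nmat (x i) (y i)) * f y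

/-- The unary signature `Δ₀ = [1,0]`. -/
noncomputable def Delta0 : (Fin 1 → Bool) → ℂ := fun x => if x 0 = false then 1 else 0

/-- For `k ≥ −1`, the symmetric arity-`(k+2)` signature `h_k`:
value `−k` at Hamming weight `0`, value `1` at weight `1`, `0` at weight `≥ 2`. -/
noncomputable def hsig (k : ℤ) : (Fin (k + 2).toNat → Bool) → ℂ :=
  fun x => if wt1 x = 0 then (-k : ℂ) else if wt1 x = 1 then 1 else 0

/-- The symmetric arity-`m` signature `g_m`: value `2` at Hamming weight `0`,
value `1` at weight `1`, `0` at weight `≥ 2`. -/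
noncomputable def gsig {m : ℕ} : (Fin m → Bool) → ℂ :=
  fun x => if wt1 x = 0 then 2 else if wt1 x = 1 then 1 else 0

/-!
Since `N_{a,b} = [a ≤ b]`, the transform is `(N^{⊗n}f)(x) = Σ_{y ≥ x} f(y)` for the coordinatewise
order on `{0,1}^n`. If `f` vanishes at every `y > x`, this sum is just `f(x)`; for signatures supported
on Hamming weight `≤ 1` this happens at every `x ≠ 0`, while at `x = 0` the sum runs over all `y`.
Hence `N^{⊗n}[a, b, 0, …, 0] = [a + n b, b, 0, …, 0]`, and `h_k = [-k, 1, 0, …]` of arity `k + 2`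
is sent to `[2, 1, 0, …] = g_{k+2}`.
-/

open Finset

def supportOrderIso (α : Type*) [Fintype α] [DecidableEq α] : (α → Bool) ≃o Finset α where
  toFun x := univ.filter fun i => x i = true
  invFun s i := decide (i ∈ s)
  left_inv x := by ext i; simp
  right_inv s := by ext i; simp
  map_rel_iff' := by simp [Finset.subset_iff, Pi.le_def, Bool.le_iff_imp]

lemma wt1_eq_card_supportOrderIso {n : ℕ} (x : Fin n → Bool) :
    wt1 x = (supportOrderIso (Fin n) x).card := rfl

lemma wt1_strictMono {n : ℕ} : StrictMono (wt1 : (Fin n → Bool) → ℕ) :=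
  card_strictMono.comp (supportOrderIso (Fin n)).strictMono

lemma wt1_eq_zero_iff {n : ℕ} {x : Fin n → Bool} : wt1 x = 0 ↔ x = ⊥ := by
  rw [wt1_eq_card_supportOrderIso, card_eq_zero, ← bot_eq_empty, map_eq_bot_iff]

lemma card_filter_wt1_eq (n m : ℕ) :
    #(univ.filter fun x : Fin n → Bool => wt1 x = m) = n.choose m := by
  refine (card_equiv (supportOrderIso (Fin n)).toEquiv (t := powersetCard m univ) ?_).trans
    (by simp)
  intro x
  rw [mem_filter, mem_powersetCard]
  simp [wt1_eq_card_supportOrderIso]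

lemma Nmat_eq_ite (a b : Bool) : Nmat a b = if a ≤ b then 1 else 0 := by
  cases a <;> cases b <;> simp [Nmat]

open Classical in
lemma Ntrans_apply {n : ℕ} (f : (Fin n → Bool) → ℂ) (x : Fin n → Bool) :
    Ntrans f x = ∑ y ∈ univ.filter (x ≤ ·), f y := by
  simp only [Ntrans, Nmat_eq_ite, Fintype.prod_boole, ← Pi.le_def, boole_mul, sum_filter]

lemma Ntrans_apply_bot {n : ℕ} (f : (Fin n → Bool) → ℂ) : Ntrans f ⊥ = ∑ y, f y := by
  classical
  rw [Ntrans_apply, filter_true_of_mem fun y _ => bot_le]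

lemma Ntrans_apply_of_forall_lt {n : ℕ} {f : (Fin n → Bool) → ℂ} {x : Fin n → Bool}
    (hf : ∀ y, x < y → f y = 0) : Ntrans f x = f x := by
  classical
  rw [Ntrans_apply, sum_eq_single_of_mem x (by simp)]
  intro y hy hyx
  exact hf y (lt_of_le_of_ne (mem_filter.1 hy).2 (Ne.symm hyx))

lemma Ntrans_Delta0 : Ntrans Delta0 = Delta0 := by
  have hDelta0 : ∀ y : Fin 1 → Bool, Delta0 y = if y = ⊥ then 1 else 0 := by
    intro y
    simp only [Delta0, funext_iff, Fin.forall_fin_one, Pi.bot_apply, bot_eq_false]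
  funext x
  refine Ntrans_apply_of_forall_lt fun y hxy => ?_
  rw [hDelta0, if_neg (bot_le.trans_lt hxy).ne']

/-- The symmetric signature `[a, b, 0, …, 0]`. -/
noncomputable def lowWeightSig {n : ℕ} (a b : ℂ) : (Fin n → Bool) → ℂ :=
  fun x => if wt1 x = 0 then a else if wt1 x = 1 then b else 0

lemma sum_lowWeightSig {n : ℕ} (a b : ℂ) :
    ∑ y : Fin n → Bool, lowWeightSig a b y = a + n * b := by
  have hsplit : ∀ y : Fin n → Bool, lowWeightSig a b y =
      a * (if wt1 y = 0 then 1 else 0) + b * (if wt1 y = 1 then 1 else 0) := by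
    intro y
    unfold lowWeightSig
    split_ifs <;> simp_all
  simp only [hsplit, sum_add_distrib, ← mul_sum, sum_boole, card_filter_wt1_eq,
    Nat.choose_zero_right, Nat.choose_one_right]
  push_cast
  ring

theorem Ntrans_lowWeightSig {n : ℕ} (a b : ℂ) :
    Ntrans (lowWeightSig a b : (Fin n → Bool) → ℂ) = lowWeightSig (a + n * b) b := by
  funext x
  by_cases hx : x = ⊥
  · subst hx
    rw [Ntrans_apply_bot, sum_lowWeightSig]
    simp [lowWeightSig, wt1_eq_zero_iff]
  · have hx0 : wt1 x ≠ 0 := wt1_eq_zero_iff.not.2 hx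
    rw [Ntrans_apply_of_forall_lt]
    · simp [lowWeightSig, hx0]
    · intro y hxy
      have hwt : wt1 x < wt1 y := wt1_strictMono hxy
      simp only [lowWeightSig]
      rw [if_neg (by omega), if_neg (by omega)]

lemma Ntrans_hsig {k : ℤ} (hk : -1 ≤ k) :
    Ntrans (hsig k) = (gsig : (Fin (k + 2).toNat → Bool) → ℂ) := by
  have hn : (((k + 2).toNat : ℕ) : ℂ) = k + 2 := by exact_mod_cast Int.toNat_of_nonneg (by omega)
  change Ntrans (lowWeightSig _ _) = lowWeightSig _ _
  rw [Ntrans_lowWeightSig, hn]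
  ring_nf

/-- (i) `N^{⊗1}Δ₀ = Δ₀`; (ii) for every integer `k ≥ −1`,
`N^{⊗(k+2)} h_k = g_{k+2}`; consequently the image under this transformation
of the set `{Δ₀} ∪ {h_k : k ≥ −1}` is `{Δ₀} ∪ {g_k : k ≥ 1}`. -/
theorem stmt12 :
    Ntrans Delta0 = Delta0 ∧
    (∀ k : ℤ, -1 ≤ k → Ntrans (hsig k) = (gsig : (Fin (k + 2).toNat → Bool) → ℂ)) ∧
    ((fun s : Σ n : ℕ, (Fin n → Bool) → ℂ =>
        (⟨s.1, Ntrans s.2⟩ : Σ n : ℕ, (Fin n → Bool) → ℂ)) ''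
      ({⟨1, Delta0⟩} ∪ {s | ∃ k : ℤ, -1 ≤ k ∧ s = ⟨(k + 2).toNat, hsig k⟩}) =
      ({⟨1, Delta0⟩} ∪ {s | ∃ m : ℕ, 1 ≤ m ∧ s = ⟨m, gsig⟩})) := by
  refine ⟨Ntrans_Delta0, fun k hk => Ntrans_hsig hk, ?_⟩
  rw [Set.image_union, Set.image_singleton, Ntrans_Delta0]
  congr 1
  ext s
  simp only [Set.mem_image, Set.mem_ofPred_eq]
  constructor
  · rintro ⟨_, ⟨k, hk, rfl⟩, rfl⟩
    exact ⟨(k + 2).toNat, by omega, by rw [Ntrans_hsig hk]⟩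
  · rintro ⟨m, hm, rfl⟩
    have hm' : ((m - 2 : ℤ) + 2).toNat = m := by omega
    refine ⟨_, ⟨m - 2, by omega, rfl⟩, ?_⟩
    change (⟨_, Ntrans (hsig (m - 2))⟩ : Σ n : ℕ, (Fin n → Bool) → ℂ) = ⟨m, gsig⟩
    rw [Ntrans_hsig (by omega), hm']
end
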